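/- The commutator subgroup of the right-angled Coxeter group C(Γ) embeds into the commutator subgroup of the right-angled Artin group A(Γ). More generally, every graph product kernel KP_0(Γ,𝒢) of countable groups embeds into [A(Γ), A(Γ)]. -/

import Mathlib

open Monoid
open scoped commutatorElement

variable {V : Type*} (Γ : SimpleGraph V) (G : V → Type*) [∀ v, Group (G v)]

/-- The defining relators of the graph product: commutators of elements of
vertex groups attached to adjacent vertices. -/
def graphProductRels : Set (Monoid.CoprodI G) :=
  {x | ∃ (u v : V) (g : G u) (h : G v), Γ.Adj u v ∧
        x = ⁅Monoid.CoprodI.of g, Monoid.CoprodI.of h⁆}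

/-- The graph product of the groups `G v` over the graph `Γ`. -/
def GraphProduct : Type _ :=
  Monoid.CoprodI G ⧸ Subgroup.normalClosure (graphProductRels Γ G)

instance : Group (GraphProduct Γ G) :=
  QuotientGroup.Quotient.group _

/-- The canonical map from a vertex group into the graph product. -/
def GraphProduct.of (v : V) : G v →* GraphProduct Γ G :=
  (QuotientGroup.mk' _).comp Monoid.CoprodI.of

/-- The natural projection from the graph product onto the direct product of the
vertex groups. -/
def GraphProduct.proj [DecidableEq V] : GraphProduct Γ G →* ((v : V) → G v) :=
  QuotientGroup.lift _ (Monoid.CoprodI.lift fun v => MonoidHom.mulSingle G v)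
    (Subgroup.normalClosure_le_normal <| by
      rintro x ⟨u, v, g, h, hadj, rfl⟩
      have huv : u ≠ v := hadj.ne
      simp only [SetLike.mem_coe, MonoidHom.mem_ker, map_commutatorElement,
        Monoid.CoprodI.lift_of]
      exact commutatorElement_eq_one_iff_commute.mpr
        (Pi.mulSingle_commute huv g h))

/-- The graph product kernel: the kernel of the natural surjection onto the
direct product of the vertex groups. -/
def GraphProductKernel [DecidableEq V] : Subgroup (GraphProduct Γ G) :=
  MonoidHom.ker (GraphProduct.proj Γ G)

/-!
For bijections of sets `e v : G v ≃ H v`, let `of v g` act on states `(w, b)` with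
`w : ∀ v, G v` and `b` in the graph product of the `H v` by `w ↦ Pi.mulSingle v g * w` and
`b ↦ of v (e v (g * w v) * (e v (w v))⁻¹) * b`. This is the coordinate action conjugated by the
shear `(w, b) ↦ (w, of v (e v (w v)) * b)`, so the actions of adjacent vertices commute and
assemble into an action of the whole graph product. Reading off the second coordinate of the
orbit of `(1, 1)` is a homomorphism on the graph product kernel with values in the kernel for
the `H v`, and the same construction for `e⁻¹` undoes it, so it is injective.

Replacing `G v` by `G v × ℤ`, which is countably infinite and retracts onto `G v`, and taking
`H v = ℤ` embeds the kernel into the kernel of `A(Γ) → ℤ^V`. For finite `V` the abelianization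
of a graph product factors through `∏ G v`, so that kernel is `[A(Γ), A(Γ)]`; likewise
`[C(Γ), C(Γ)]` is the kernel for `G v = ℤ/2`.
-/

open Equiv

namespace GraphProduct

variable {Γ G}

theorem of_commute {u v : V} (huv : Γ.Adj u v) (g : G u) (g' : G v) :
    Commute (of Γ G u g) (of Γ G v g') := by
  rw [← commutatorElement_eq_one_iff_commute]
  exact (map_commutatorElement (QuotientGroup.mk' _) _ _).trans <|
    (QuotientGroup.eq_one_iff _).mpr <| Subgroup.subset_normalClosure ⟨u, v, g, g', huv, rfl⟩

section Lift

variable {K : Type*} [Group K]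

def lift (f : ∀ v, G v →* K)
    (hf : ∀ ⦃u v⦄, Γ.Adj u v → ∀ (g : G u) (g' : G v), Commute (f u g) (f v g')) :
    GraphProduct Γ G →* K :=
  QuotientGroup.lift _ (CoprodI.lift f) <| Subgroup.normalClosure_le_normal <| by
    rintro _ ⟨u, v, g, g', huv, rfl⟩
    simpa [map_commutatorElement, commutatorElement_eq_one_iff_commute] using hf huv g g'

@[simp]
theorem lift_of (f : ∀ v, G v →* K)
    (hf : ∀ ⦃u v⦄, Γ.Adj u v → ∀ (g : G u) (g' : G v), Commute (f u g) (f v g'))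
    (v : V) (g : G v) : lift f hf (of Γ G v g) = f v g :=
  CoprodI.lift_of f g

theorem hom_ext {φ ψ : GraphProduct Γ G →* K}
    (h : ∀ v, φ.comp (of Γ G v) = ψ.comp (of Γ G v)) : φ = ψ :=
  QuotientGroup.monoidHom_ext _ (CoprodI.ext_hom _ _ h)

end Lift

@[elab_as_elim]
theorem induction_on {P : GraphProduct Γ G → Prop} (x : GraphProduct Γ G) (one : P 1)
    (of : ∀ v (g : G v), P (of Γ G v g)) (mul : ∀ x y, P x → P y → P (x * y)) : P x := by
  induction x using QuotientGroup.induction_on with | H y => ?_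
  induction y using CoprodI.induction_on with
  | one => exact one
  | of v g => exact of v g
  | mul y z hy hz => exact mul _ _ hy hz

@[simp]
theorem proj_of [DecidableEq V] (v : V) (g : G v) : proj Γ G (of Γ G v g) = Pi.mulSingle v g :=
  CoprodI.lift_of (fun v => MonoidHom.mulSingle G v) g

section Map

variable {H : V → Type*} [∀ v, Group (H v)] (f : ∀ v, G v →* H v)

def map : GraphProduct Γ G →* GraphProduct Γ H :=
  lift (fun v => (of Γ H v).comp (f v)) fun _ _ huv _ _ => of_commute huv _ _

@[simp]
theorem map_of (v : V) (g : G v) : map f (of Γ G v g) = of Γ H v (f v g) :=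
  lift_of _ _ v g

theorem map_leftInverse {r : ∀ v, H v →* G v} (h : ∀ v, Function.LeftInverse (r v) (f v)) :
    Function.LeftInverse (map (Γ := Γ) r) (map f) := by
  have hcomp : (map r).comp (map f) = MonoidHom.id (GraphProduct Γ G) :=
    hom_ext fun v => MonoidHom.ext fun g => by simp [h v g]
  exact DFunLike.congr_fun hcomp

variable [DecidableEq V]

theorem proj_map (x : GraphProduct Γ G) : proj Γ H (map f x) = fun v => f v (proj Γ G x v) := by
  induction x using induction_on with
  | one => ext; simp
  | of v g =>
    ext u
    rcases eq_or_ne u v with rfl | huv <;> simp [Pi.mulSingle_eq_of_ne, *]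
  | mul x y hx hy => ext; simp [hx, hy]

variable (Γ) in
def kernelMap : GraphProductKernel Γ G →* GraphProductKernel Γ H :=
  ((map f).comp (GraphProductKernel Γ G).subtype).codRestrict (GraphProductKernel Γ H) fun x => by
    show proj Γ H (map f x.1) = 1
    rw [proj_map, MonoidHom.mem_ker.mp x.2]
    exact funext fun v => map_one (f v)

theorem kernelMap_injective {r : ∀ v, H v →* G v}
    (h : ∀ v, Function.LeftInverse (r v) (f v)) : Function.Injective (kernelMap Γ f) :=
  fun _ _ hxy => Subtype.ext <| (map_leftInverse f h).injective (congrArg Subtype.val hxy)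

end Map

end GraphProduct

theorem graphProductKernel_le_commutator [Finite V] [DecidableEq V] :
    GraphProductKernel Γ G ≤ commutator (GraphProduct Γ G) := by
  have := Fintype.ofFinite V
  let ofVertex v := Abelianization.of.comp (GraphProduct.of Γ G v)
  let abel : (∀ v, G v) →* Abelianization (GraphProduct Γ G) :=
    MonoidHom.noncommPiCoprod ofVertex fun _ _ _ _ _ => Commute.all _ _
  have habel : abel.comp (GraphProduct.proj Γ G) = Abelianization.of :=
    GraphProduct.hom_ext fun v => MonoidHom.ext fun g => by
      simp only [MonoidHom.comp_apply, GraphProduct.proj_of]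
      exact MonoidHom.noncommPiCoprod_mulSingle (ϕ := ofVertex) v g
  rw [← Abelianization.ker_of, ← habel, GraphProductKernel, ← MonoidHom.comap_ker]
  exact MonoidHom.ker_le_comap _ _

theorem commutator_le_graphProductKernel {V : Type*} [DecidableEq V] (Γ : SimpleGraph V)
    (G : V → Type*) [∀ v, CommGroup (G v)] :
    commutator (GraphProduct Γ G) ≤ GraphProductKernel Γ G :=
  Abelianization.commutator_subset_ker _

section TwistedPerm

variable {K K' X Y : Type*} [Group K] [Group K'] [Group Y]

def twistedPerm (ρ : K →* Perm X) (φ : X → Y) : K →* Perm (X × Y) :=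
  (MulAut.conj (prodShear (Equiv.refl X) fun x => Equiv.mulLeft (φ x))).toMonoidHom.comp
    { toFun := fun k => (ρ k).prodCongr (Equiv.refl Y)
      map_one' := by ext <;> simp
      map_mul' := fun k k' => by ext <;> simp }

@[simp]
theorem twistedPerm_apply (ρ : K →* Perm X) (φ : X → Y) (k : K) (s : X × Y) :
    twistedPerm ρ φ k s = (ρ k s.1, φ (ρ k s.1) * ((φ s.1)⁻¹ * s.2)) := by
  simp [twistedPerm, MulAut.conj_apply, Equiv.prodShear]

theorem twistedPerm_commute {ρ : K →* Perm X} {ρ' : K' →* Perm X} {φ φ' : X → Y}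
    {k : K} {k' : K'} (hρ : Commute (ρ k) (ρ' k')) (hφ : ∀ x, φ (ρ' k' x) = φ x)
    (hφ' : ∀ x, φ' (ρ k x) = φ' x) (hY : ∀ x x', Commute (φ x) (φ' x')) :
    Commute (twistedPerm ρ φ k) (twistedPerm ρ' φ' k') := by
  have hρx (x : X) : ρ k (ρ' k' x) = ρ' k' (ρ k x) := congrArg (· x) hρ.eq
  have hshift (a b c d : X) : Commute (φ a * (φ b)⁻¹) (φ' c * (φ' d)⁻¹) :=
    ((hY a c).mul_right (hY a d).inv_right).mul_left
      ((hY b c).mul_right (hY b d).inv_right).inv_left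
  ext ⟨x, y⟩ <;> simp only [Perm.mul_apply, twistedPerm_apply]
  · exact hρx x
  · rw [hρx, hφ, hφ, ← hρx, hφ', hφ']
    simpa only [mul_assoc] using congrArg (· * y) (hshift (ρ k x) x (ρ' k' x) x).eq

end TwistedPerm

namespace GraphProduct

variable {Γ G} [DecidableEq V] {H : V → Type*} [∀ v, Group (H v)] (e : ∀ v, G v ≃ H v)

variable (Γ) in
def monodromy : GraphProduct Γ G →* Perm ((∀ v, G v) × GraphProduct Γ H) :=
  lift (fun v => twistedPerm ((MulAction.toPermHom _ _).comp (MonoidHom.mulSingle G v))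
      fun w => of Γ H v (e v (w v)))
    fun u v huv g g' => by
      refine twistedPerm_commute
        ((Pi.mulSingle_commute huv.ne g g').map (MulAction.toPermHom _ _)) ?_ ?_
        fun _ _ => of_commute huv _ _
      all_goals intro w; simp [Pi.mulSingle_eq_of_ne, huv.ne, huv.ne']

def cocycle (x : GraphProduct Γ G) (w : ∀ v, G v) : GraphProduct Γ H :=
  (monodromy Γ e x (w, 1)).2

theorem monodromy_apply (x : GraphProduct Γ G) (w : ∀ v, G v) (b : GraphProduct Γ H) :
    monodromy Γ e x (w, b) = (proj Γ G x * w, cocycle e x w * b) := by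
  induction x using induction_on generalizing w b with
  | one => simp [cocycle]
  | of v g => simp [monodromy, cocycle, mul_assoc]
  | mul x y hx hy =>
    have hxy : cocycle e (x * y) w = cocycle e x (proj Γ G y * w) * cocycle e y w := by
      rw [cocycle, map_mul, Perm.mul_apply, hy, hx, mul_one]
    rw [map_mul, Perm.mul_apply, hy, hx, hxy, map_mul, mul_assoc, mul_assoc]

theorem cocycle_one (w : ∀ v, G v) : cocycle e (1 : GraphProduct Γ G) w = 1 := by
  simp [cocycle]

theorem cocycle_of (v : V) (g : G v) (w : ∀ v, G v) :
    cocycle e (of Γ G v g) w = of Γ H v (e v (g * w v) * (e v (w v))⁻¹) := by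
  simp [cocycle, monodromy]

theorem cocycle_mul (x y : GraphProduct Γ G) (w : ∀ v, G v) :
    cocycle e (x * y) w = cocycle e x (proj Γ G y * w) * cocycle e y w := by
  rw [cocycle, map_mul, Perm.mul_apply, monodromy_apply, monodromy_apply, mul_one]

theorem proj_cocycle (x : GraphProduct Γ G) (w : ∀ v, G v) :
    proj Γ H (cocycle e x w) = piCongrRight e (proj Γ G x * w) * (piCongrRight e w)⁻¹ := by
  induction x using induction_on generalizing w with
  | one => simp [cocycle_one]
  | of v g =>
    ext u
    rcases eq_or_ne u v with rfl | huv <;> simp [cocycle_of, Pi.mulSingle_eq_of_ne, *]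
  | mul x y hx hy =>
    rw [cocycle_mul, map_mul, hx, hy, (proj Γ G).map_mul]
    simp only [mul_assoc, inv_mul_cancel_left]

theorem cocycle_symm_cocycle (x : GraphProduct Γ G) (w : ∀ v, G v) :
    cocycle (fun v => (e v).symm) (cocycle e x w) (piCongrRight e w) = x := by
  induction x using induction_on generalizing w with
  | one => simp [cocycle_one]
  | of v g => rw [cocycle_of, cocycle_of]; simp
  | mul x y hx hy =>
    rw [cocycle_mul, cocycle_mul, proj_cocycle, inv_mul_cancel_right, hx, hy]

variable (Γ) in
def kernelHomOfEquiv : GraphProductKernel Γ G →* GraphProductKernel Γ H where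
  toFun x := ⟨cocycle e x 1, by
    rw [GraphProductKernel, MonoidHom.mem_ker, proj_cocycle, MonoidHom.mem_ker.mp x.2,
      mul_one, mul_inv_cancel]⟩
  map_one' := Subtype.ext (cocycle_one e 1)
  map_mul' x y := Subtype.ext <| by
    show cocycle e (x.1 * y.1) 1 = cocycle e x.1 1 * cocycle e y.1 1
    rw [cocycle_mul, MonoidHom.mem_ker.mp y.2, mul_one]

theorem kernelHomOfEquiv_injective : Function.Injective (kernelHomOfEquiv Γ e) := by
  intro x y hxy
  have h := congrArg (fun z : GraphProductKernel Γ H =>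
    cocycle (fun v => (e v).symm) (z : GraphProduct Γ H) (piCongrRight e 1)) hxy
  exact Subtype.ext <| by simpa [kernelHomOfEquiv, cocycle_symm_cocycle] using h

end GraphProduct

theorem exists_injective_graphProductKernel_to_raag_commutator [Finite V] [DecidableEq V]
    [∀ v, Countable (G v)] :
    ∃ f : GraphProductKernel Γ G →* commutator (GraphProduct Γ fun _ => Multiplicative ℤ),
      Function.Injective f := by
  let e v : G v × Multiplicative ℤ ≃ Multiplicative ℤ := nonempty_equiv_of_countable.some
  let stabilize := GraphProduct.kernelMap Γ fun v => MonoidHom.inl (G v) (Multiplicative ℤ)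
  have stabilize_injective : Function.Injective stabilize :=
    GraphProduct.kernelMap_injective _ (r := fun v => MonoidHom.fst _ _) fun _ _ => rfl
  have hle := graphProductKernel_le_commutator Γ fun _ => Multiplicative ℤ
  exact ⟨(Subgroup.inclusion hle).comp ((GraphProduct.kernelHomOfEquiv Γ e).comp stabilize),
    (Subgroup.inclusion_injective hle).comp
      ((GraphProduct.kernelHomOfEquiv_injective e).comp stabilize_injective)⟩

/-- The commutator subgroup of the right-angled Coxeter group `C(Γ)` embeds into the
commutator subgroup of the right-angled Artin group `A(Γ)`; more generally, every graph
product kernel `KP_0(Γ,𝒢)` of countable groups embeds into `[A(Γ), A(Γ)]`. -/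
theorem graphProductKernel_embeds_in_raag_commutator
    {V : Type*} [Finite V] [DecidableEq V] (Γ : SimpleGraph V)
    (G : V → Type*) [∀ v, Group (G v)] [∀ v, Countable (G v)] :
    (∃ f : commutator (GraphProduct Γ (fun _ => Multiplicative (ZMod 2))) →*
        commutator (GraphProduct Γ (fun _ => Multiplicative ℤ)),
      Function.Injective f) ∧
    (∃ f : (GraphProductKernel Γ G) →*
        commutator (GraphProduct Γ (fun _ => Multiplicative ℤ)),
      Function.Injective f) := by
  obtain ⟨f, hf⟩ :=
    exists_injective_graphProductKernel_to_raag_commutator Γ fun _ => Multiplicative (ZMod 2)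
  exact ⟨⟨f.comp (Subgroup.inclusion (commutator_le_graphProductKernel Γ _)),
      hf.comp (Subgroup.inclusion_injective _)⟩,
    exists_injective_graphProductKernel_to_raag_commutator Γ G⟩
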